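/- arXiv:1601.06158 — 3 statements merged into one kernel-verified Lean document; each statement's English description precedes it below -/
import Mathlib

section
/- The number of lattice paths from (0,0) to (n,k), with n ≥ k ≥ 0, using unit steps (1,0) and (0,1) that stay weakly below the diagonal y = x, equals the coefficient of x^k in C(x)^{n-k+1}, where C(x) = Σ_n C_n x^n is the generating function of the Catalan numbers. -/
open Finset PowerSeries

/-- Large Schröder numbers. -/
def schroeder : ℕ → ℕ
  | 0 => 1
  | n + 1 => schroeder n + ∑ i : Fin (n + 1), schroeder i * schroeder (n - i)

/-- The points visited by a path (a list of steps) starting at (0,0). -/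
def pts (l : List (ℤ × ℤ)) : List (ℤ × ℤ) :=
  l.scanl (fun p s => (p.1 + s.1, p.2 + s.2)) (0, 0)

/-- The endpoint of a path starting at (0,0). -/
def endPt (l : List (ℤ × ℤ)) : ℤ × ℤ :=
  ((l.map Prod.fst).sum, (l.map Prod.snd).sum)

/-- All steps are unit steps (1,0) or (0,1). -/
def unitSteps (l : List (ℤ × ℤ)) : Prop := ∀ s ∈ l, s = (1, 0) ∨ s = (0, 1)

/-- All steps are (1,0), (0,1) or (1,1). -/
def schSteps (l : List (ℤ × ℤ)) : Prop := ∀ s ∈ l, s = (1, 0) ∨ s = (0, 1) ∨ s = (1, 1)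

/-- The path stays weakly below the diagonal y = x. -/
def weaklyBelow (l : List (ℤ × ℤ)) : Prop := ∀ p ∈ pts l, p.2 ≤ p.1

/-- The path stays strictly below the diagonal except at its start (0,0). -/
def strictBelowAfterStart (l : List (ℤ × ℤ)) : Prop :=
  ∀ p ∈ pts l, p ≠ (0, 0) → p.2 < p.1

/-- Validity of a path starting at point `p` in a lattice where steps (1,0) and (0,1)
are allowed everywhere and the diagonal step (1,1) is allowed exactly from points
satisfying `D`. -/
def okFrom (D : ℤ × ℤ → Prop) : ℤ × ℤ → List (ℤ × ℤ) → Prop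
  | _, [] => True
  | p, s :: l => (s = (1, 0) ∨ s = (0, 1) ∨ (s = (1, 1) ∧ D p)) ∧
      okFrom D (p.1 + s.1, p.2 + s.2) l

/-- Paths from (0,0) to (n,k) in the Catalan–Schröder lattice L_CS:
diagonal steps allowed from points (a,b) with b ≥ a. -/
def LCS (n k : ℕ) : Set (List (ℤ × ℤ)) :=
  {l | okFrom (fun p => p.1 ≤ p.2) (0, 0) l ∧ endPt l = ((n : ℤ), (k : ℤ))}

/-- Paths from (0,0) to (n,k) in the lattice L*_CS:
diagonal steps allowed only from points (a,b) with b > a. -/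
def LCSstar (n k : ℕ) : Set (List (ℤ × ℤ)) :=
  {l | okFrom (fun p => p.1 < p.2) (0, 0) l ∧ endPt l = ((n : ℤ), (k : ℤ))}

/-- Weakly subdiagonal unit-step paths from (0,0) to (n,k). -/
def CPath (n k : ℕ) : Set (List (ℤ × ℤ)) :=
  {l | unitSteps l ∧ endPt l = ((n : ℤ), (k : ℤ)) ∧ weaklyBelow l}

/-- Weakly subdiagonal paths from (0,0) to (n,k) with steps (1,0),(0,1),(1,1). -/
def SPath (n k : ℕ) : Set (List (ℤ × ℤ)) :=
  {l | schSteps l ∧ endPt l = ((n : ℤ), (k : ℤ)) ∧ weaklyBelow l}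

/-- Number of paths from (0,0) to (n,n) in L_CS. -/
noncomputable def fCS (n : ℕ) : ℕ := Nat.card ↥(LCS n n)

/-- Number of paths from (0,0) to (n,n) in L*_CS. -/
noncomputable def fCSstar (n : ℕ) : ℕ := Nat.card ↥(LCSstar n n)

/-- Generating function of the Catalan numbers. -/
noncomputable def catalanGF : PowerSeries ℤ := PowerSeries.mk fun n => (catalan n : ℤ)

/-- Generating function of the large Schröder numbers. -/
noncomputable def schroederGF : PowerSeries ℤ := PowerSeries.mk fun n => (schroeder n : ℤ)

/-- Generating function F(x) of diagonal path counts in L_CS. -/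
noncomputable def FGF : PowerSeries ℤ := PowerSeries.mk fun n => (fCS n : ℤ)

/-- Generating function F*(x) of diagonal path counts in L*_CS. -/
noncomputable def FstarGF : PowerSeries ℤ := PowerSeries.mk fun n => (fCSstar n : ℤ)

/-- Substitution x ↦ x² in a formal power series: g(x²). -/
noncomputable def subSq (g : PowerSeries ℤ) : PowerSeries ℤ :=
  PowerSeries.mk fun n => if 2 ∣ n then PowerSeries.coeff (n / 2) g else 0

/-- Substitution x ↦ x³ in a formal power series: g(x³). -/
noncomputable def subCube (g : PowerSeries ℤ) : PowerSeries ℤ :=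
  PowerSeries.mk fun n => if 3 ∣ n then PowerSeries.coeff (n / 3) g else 0

/-!
A path to `(n+1, k+1)` ends either with an up step from `(n+1, k)` or with a right step from
`(n, k+1)`, the latter only possible when `k+1 ≤ n`. So the number `a(k, m)` of paths to
`(k+m, k)` satisfies `a(0, m) = 1` and `a(k+1, m) = a(k, m+1) + a(k+1, m-1)`, where
`a(k+1, -1) = 0`. The Catalan equation `C = 1 + x C²` gives `C^(m+1) = C^m + x C^(m+2)`, whose
coefficient of `x^(k+1)` is the same recursion for `[x^k] C^(m+1)`.
-/

theorem endPt_eq_sum (l : List (ℤ × ℤ)) : endPt l = l.sum :=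
  Prod.ext (map_list_sum (AddMonoidHom.fst ℤ ℤ) l).symm
    (map_list_sum (AddMonoidHom.snd ℤ ℤ) l).symm

theorem endPt_append_singleton (l : List (ℤ × ℤ)) (s : ℤ × ℤ) :
    endPt (l ++ [s]) = endPt l + s := by
  simp [endPt_eq_sum]

theorem pts_append_singleton (l : List (ℤ × ℤ)) (s : ℤ × ℤ) :
    pts (l ++ [s]) = pts l ++ [endPt l + s] := by
  change (l ++ [s]).scanl (· + ·) 0 = l.scanl (· + ·) 0 ++ [endPt l + s]
  simp [List.scanl_append, endPt_eq_sum, List.sum_eq_foldl]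

theorem endPt_mem_pts (l : List (ℤ × ℤ)) : endPt l ∈ pts l := by
  induction l using List.reverseRecOn with
  | nil => simp [pts, endPt]
  | append_singleton l s _ => simp [pts_append_singleton, endPt_append_singleton]

theorem unitSteps_append_singleton {l : List (ℤ × ℤ)} {s : ℤ × ℤ} :
    unitSteps (l ++ [s]) ↔ unitSteps l ∧ (s = (1, 0) ∨ s = (0, 1)) := by
  simp [unitSteps, or_imp, forall_and]

theorem weaklyBelow_append_singleton {l : List (ℤ × ℤ)} {s : ℤ × ℤ} :
    weaklyBelow (l ++ [s]) ↔ weaklyBelow l ∧ (endPt l + s).2 ≤ (endPt l + s).1 := by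
  simp [weaklyBelow, pts_append_singleton, or_imp, forall_and]

theorem length_eq_of_unitSteps {l : List (ℤ × ℤ)} (hu : unitSteps l) :
    (l.length : ℤ) = (endPt l).1 + (endPt l).2 := by
  induction l with
  | nil => simp [endPt]
  | cons s l ih =>
    have hl := ih fun t ht ↦ hu t (List.mem_cons_of_mem s ht)
    rcases hu s List.mem_cons_self with rfl | rfl <;>
      simp only [endPt_eq_sum, List.sum_cons, List.length_cons, Prod.fst_add, Prod.snd_add]
        at hl ⊢ <;>
      push_cast <;> linarith

theorem CPath_finite (n k : ℕ) : (CPath n k).Finite := by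
  let S : Set (ℤ × ℤ) := {(1, 0), (0, 1)}
  refine ((List.finite_length_le S (n + k)).image (List.map Subtype.val)).subset ?_
  rintro l ⟨hu, he, -⟩
  have hS : ∀ s ∈ l, s ∈ S := hu
  have hlen : (l.length : ℤ) = n + k := by simpa [he] using length_eq_of_unitSteps hu
  exact ⟨l.attachWith (· ∈ S) hS, by rw [Set.mem_ofPred_eq, List.length_attachWith]; omega,
    List.attachWith_map_subtype_val hS⟩

theorem CPath_eq_empty_of_lt {n k : ℕ} (h : n < k) : CPath n k = ∅ := by
  refine Set.eq_empty_of_forall_notMem fun l ⟨_, he, hw⟩ ↦ ?_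
  have := hw _ (endPt_mem_pts l)
  rw [he] at this
  omega

theorem CPath_zero (n : ℕ) : CPath n 0 = {List.replicate n (1, 0)} := by
  ext l
  simp only [CPath, Set.mem_ofPred_eq, Set.mem_singleton_iff]
  constructor
  · rintro ⟨hu, he, -⟩
    have hhoriz : ∀ s ∈ l, s = (1, 0) := by
      intro s hs
      have hsnd : s.2 = 0 := List.all_zero_of_le_zero_le_of_sum_eq_zero
        (fun _ ht ↦ by
          obtain ⟨t, ht', rfl⟩ := List.mem_map.1 ht
          rcases hu t ht' with rfl | rfl <;> simp)
        (by simpa [endPt] using congrArg Prod.snd he) (List.mem_map_of_mem hs)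
      rcases hu s hs with rfl | rfl <;> simp_all
    have hlen : (l.length : ℤ) = n := by simpa [he] using length_eq_of_unitSteps hu
    exact List.eq_replicate_iff.2 ⟨by exact_mod_cast hlen, hhoriz⟩
  · rintro rfl
    refine ⟨fun s hs ↦ Or.inl (List.eq_of_mem_replicate hs), by simp [endPt], ?_⟩
    induction n with
    | zero => simp [weaklyBelow, pts]
    | succ n ih =>
      rw [List.replicate_succ', weaklyBelow_append_singleton, endPt_eq_sum]
      exact ⟨ih, by simp; positivity⟩

theorem CPath_succ_succ {n k : ℕ} (hk : k ≤ n) :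
    CPath (n + 1) (k + 1) =
      (· ++ [(0, 1)]) '' CPath (n + 1) k ∪ (· ++ [(1, 0)]) '' CPath n (k + 1) := by
  ext l
  constructor
  · rintro ⟨hu, he, hw⟩
    obtain ⟨l, s, rfl⟩ :=
      l.eq_nil_or_concat'.resolve_left (by rintro rfl; simp [endPt] at he; omega)
    rw [unitSteps_append_singleton] at hu
    rw [endPt_append_singleton] at he
    rw [weaklyBelow_append_singleton] at hw
    obtain ⟨hu, rfl | rfl⟩ := hu
    · exact Or.inr ⟨l, ⟨hu, by simpa using eq_sub_of_add_eq he, hw.1⟩, rfl⟩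
    · exact Or.inl ⟨l, ⟨hu, by simpa using eq_sub_of_add_eq he, hw.1⟩, rfl⟩
  · rintro (⟨l, ⟨hu, he, hw⟩, rfl⟩ | ⟨l, ⟨hu, he, hw⟩, rfl⟩) <;>
      refine ⟨unitSteps_append_singleton.2 ⟨hu, by simp⟩, ?_,
        weaklyBelow_append_singleton.2 ⟨hw, ?_⟩⟩ <;>
      simp [endPt_append_singleton, he] <;> omega

theorem ncard_CPath_succ_succ {n k : ℕ} (hk : k ≤ n) :
    (CPath (n + 1) (k + 1)).ncard = (CPath (n + 1) k).ncard + (CPath n (k + 1)).ncard := by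
  have hdisj : Disjoint ((· ++ [((0 : ℤ), (1 : ℤ))]) '' CPath (n + 1) k)
      ((· ++ [(1, 0)]) '' CPath n (k + 1)) :=
    Set.disjoint_left.2 fun _ ⟨_, _, h₁⟩ ⟨_, _, h₂⟩ ↦ by
      simp [← h₁, List.append_singleton_inj] at h₂
  rw [CPath_succ_succ hk, Set.ncard_union_eq hdisj ((CPath_finite _ _).image _)
      ((CPath_finite _ _).image _),
    Set.ncard_image_of_injective _ (List.append_left_injective _),
    Set.ncard_image_of_injective _ (List.append_left_injective _)]

theorem catalanGF_eq_one_add_X_mul_sq : catalanGF = 1 + X * catalanGF ^ 2 := by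
  ext (_ | n)
  · simp [catalanGF]
  · rw [map_add, coeff_one, if_neg n.succ_ne_zero, pow_two, coeff_succ_X_mul, coeff_mul]
    simp [catalanGF, catalan_succ']

theorem coeff_zero_catalanGF_pow (m : ℕ) : coeff 0 (catalanGF ^ m) = 1 := by
  simp [coeff_zero_eq_constantCoeff, catalanGF]

theorem coeff_succ_catalanGF_pow_succ (k m : ℕ) :
    coeff (k + 1) (catalanGF ^ (m + 1)) =
      coeff (k + 1) (catalanGF ^ m) + coeff k (catalanGF ^ (m + 2)) := by
  have hpow : catalanGF ^ (m + 1) = catalanGF ^ m + X * catalanGF ^ (m + 2) := by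
    rw [pow_succ]
    nth_rw 2 [catalanGF_eq_one_add_X_mul_sq]
    ring
  rw [hpow, map_add, coeff_succ_X_mul]

theorem ncard_CPath_add (k m : ℕ) :
    ((CPath (k + m) k).ncard : ℤ) = coeff k (catalanGF ^ (m + 1)) := by
  induction k generalizing m with
  | zero => simp [CPath_zero, coeff_zero_catalanGF_pow]
  | succ k ihk =>
    induction m with
    | zero =>
      rw [add_zero, ncard_CPath_succ_succ le_rfl, CPath_eq_empty_of_lt k.lt_succ_self,
        coeff_succ_catalanGF_pow_succ, ← ihk 1]
      simp
    | succ m ihm =>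
      rw [show k + 1 + (m + 1) = k + 1 + m + 1 by ring, ncard_CPath_succ_succ (by omega),
        coeff_succ_catalanGF_pow_succ, ← ihm, ← ihk (m + 2),
        show k + (m + 2) = k + 1 + m + 1 by ring]
      push_cast
      ring

/-- for n ≥ k ≥ 0, the number of weakly subdiagonal unit-step paths
from (0,0) to (n,k) equals [x^k] C(x)^(n-k+1). -/
theorem catalan_paths_count (n k : ℕ) (h : k ≤ n) :
    (Nat.card ↥(CPath n k) : ℤ) =
      PowerSeries.coeff k (catalanGF ^ (n - k + 1)) := by
  obtain ⟨m, rfl⟩ := Nat.exists_eq_add_of_le h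
  rw [Nat.card_coe_set_eq, ncard_CPath_add, Nat.add_sub_cancel_left]
end

section
/- The formal power series S(x) = Σ_n S_n x^n of large Schröder numbers satisfies the identity x·S(x)² − (1−x)·S(x) + 1 = 0 in the ring of formal power series over the integers. -/
open Finset PowerSeries

theorem schroeder_succ (n : ℕ) :
    schroeder (n + 1) = schroeder n + ∑ p ∈ antidiagonal n, schroeder p.1 * schroeder p.2 := by
  rw [schroeder, Nat.sum_antidiagonal_eq_sum_range_succ_mk,
    Fin.sum_univ_eq_sum_range (fun i => schroeder i * schroeder (n - i))]

theorem coeff_schroederGF (n : ℕ) : coeff n schroederGF = schroeder n :=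
  coeff_mk _ _

theorem schroederGF_eq_one_add_X_mul :
    schroederGF = 1 + X * schroederGF + X * schroederGF ^ 2 := by
  ext (_ | n)
  · simp [coeff_schroederGF, schroeder]
  · rw [map_add, map_add, coeff_succ_X_mul, coeff_succ_X_mul, sq, coeff_mul]
    simp [coeff_schroederGF, schroeder_succ]

/-- x·S(x)² − (1−x)·S(x) + 1 = 0 in ℤ[[x]]. -/
theorem schroederGF_quadratic :
    PowerSeries.X * schroederGF ^ 2 - (1 - PowerSeries.X) * schroederGF + 1 = 0 := by
  linear_combination -schroederGF_eq_one_add_X_mul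
end

section
/- Let f*_n be the number of lattice paths from (0,0) to (n,n) in the lattice where steps (1,0) and (0,1) are allowed everywhere and steps (1,1) are allowed only from points strictly above the diagonal y = x. Then the generating function F*(x) = Σ f*_n x^n satisfies F*(x)·(1 − x·(C(x)+S(x))) = 1 in ℤ[[x]], where C(x) and S(x) are the Catalan and large Schröder generating functions. -/
open Finset PowerSeries

/-!
All lattices in play allow a step according to the height `x - y` of the current point only.
Cutting a path from `(0,0)` to `(n+1,n+1)` where it first returns to the diagonal gives
`f*(n+1) = ∑ₘ p(m+1) f*(n-m)`, where `p` counts primitive paths, those meeting the diagonal only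
at their ends. In `L*_CS` a primitive path cannot start with a diagonal step. If it starts with
`(1,0)` it is `(1,0) w (0,1)` with `w` a Dyck path weakly below the diagonal; if it starts with
`(0,1)` it is `(0,1) w (1,0)` with `w` a path weakly above the diagonal, where diagonal steps are
always allowed, i.e. a large Schröder path. So `p(m+1) = c(m) + s(m)`, that is
`F* = 1 + x (C + S) F*`. The same first-return decomposition, applied to Dyck and Schröder
paths, yields the recursions of the Catalan and large Schröder numbers.
-/

theorem PowerSeries.mk_mul_one_sub_X_mul_mk_eq_one {R : Type*} [CommRing R] {a p : ℕ → R}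
    (h₀ : a 0 = 1) (hrec : ∀ n, a (n + 1) = ∑ m : Fin (n + 1), p m * a (n - m)) :
    mk a * (1 - X * mk p) = 1 := by
  ext n
  rw [mul_sub, mul_one, show mk a * (X * mk p) = X * (mk p * mk a) by ring, map_sub]
  cases n with
  | zero => simp [h₀]
  | succ n =>
    rw [coeff_succ_X_mul, coeff_mul, Finset.Nat.sum_antidiagonal_eq_sum_range_succ_mk,
      ← Fin.sum_univ_eq_sum_range, coeff_mk, hrec]
    simp

namespace LatticePath

variable {B C : ℤ → ℤ × ℤ → Prop} {R S : ℤ → Prop}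

-- Heights are `x - y`: the diagonal is height `0`, points below it have positive height.
def drift (s : ℤ × ℤ) : ℤ := s.1 - s.2

def height (l : List (ℤ × ℤ)) : ℤ := drift (endPt l)

def steps : Finset (ℤ × ℤ) := {(1, 0), (0, 1), (1, 1)}

lemma abs_drift_le_one {s : ℤ × ℤ} (hs : s ∈ steps) : |drift s| ≤ 1 := by
  simp only [steps, Finset.mem_insert, Finset.mem_singleton] at hs
  rcases hs with rfl | rfl | rfl <;> simp [drift]

lemma eq_of_drift_eq {s t : ℤ × ℤ} (hs : s ∈ steps) (ht : t ∈ steps) (h : drift s = drift t) :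
    s = t := by
  simp only [steps, Finset.mem_insert, Finset.mem_singleton] at hs ht
  rcases hs with rfl | rfl | rfl <;> rcases ht with rfl | rfl | rfl <;> simp_all [drift]

@[simp] lemma endPt_nil : endPt [] = 0 := rfl

@[simp] lemma endPt_cons (s : ℤ × ℤ) (l : List (ℤ × ℤ)) : endPt (s :: l) = s + endPt l := rfl

@[simp] lemma endPt_append (l₁ l₂ : List (ℤ × ℤ)) : endPt (l₁ ++ l₂) = endPt l₁ + endPt l₂ := by
  induction l₁ with
  | nil => simp
  | cons s l ih => simp [ih, add_assoc]

@[simp] lemma drift_add (s t : ℤ × ℤ) : drift (s + t) = drift s + drift t := by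
  simp only [drift, Prod.fst_add, Prod.snd_add]; ring

@[simp] lemma height_nil : height [] = 0 := rfl

@[simp] lemma height_cons (s : ℤ × ℤ) (l : List (ℤ × ℤ)) :
    height (s :: l) = drift s + height l := by
  simp [height]

@[simp] lemma height_append (l₁ l₂ : List (ℤ × ℤ)) : height (l₁ ++ l₂) = height l₁ + height l₂ := by
  simp [height]

lemma height_eq_zero_of_endPt {l : List (ℤ × ℤ)} {m : ℤ} (h : endPt l = (m, m)) : height l = 0 := by
  simp [height, h, drift]

lemma endPt_fst_nonneg {l : List (ℤ × ℤ)} (hl : ∀ s ∈ l, s ∈ steps) : 0 ≤ (endPt l).1 := by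
  induction l with
  | nil => simp
  | cons s l ih =>
    have hs := hl s List.mem_cons_self
    simp only [steps, Finset.mem_insert, Finset.mem_singleton] at hs
    have := ih fun t ht => hl t (List.mem_cons_of_mem s ht)
    rcases hs with rfl | rfl | rfl <;> simp <;> omega

lemma length_le_endPt {l : List (ℤ × ℤ)} (hl : ∀ s ∈ l, s ∈ steps) :
    (l.length : ℤ) ≤ (endPt l).1 + (endPt l).2 := by
  induction l with
  | nil => simp
  | cons s l ih =>
    have hs := hl s List.mem_cons_self
    simp only [steps, Finset.mem_insert, Finset.mem_singleton] at hs
    have := ih fun t ht => hl t (List.mem_cons_of_mem s ht)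
    rcases hs with rfl | rfl | rfl <;> simp <;> omega

def Admissible (B : ℤ → ℤ × ℤ → Prop) : ℤ → List (ℤ × ℤ) → Prop
  | _, [] => True
  | h, s :: l => B h s ∧ Admissible B (h + drift s) l

def Stays (R : ℤ → Prop) : ℤ → List (ℤ × ℤ) → Prop
  | h, [] => R h
  | h, s :: l => R h ∧ Stays R (h + drift s) l

@[simp] lemma admissible_nil (h : ℤ) : Admissible B h [] := trivial

@[simp] lemma admissible_cons (h : ℤ) (s : ℤ × ℤ) (l : List (ℤ × ℤ)) :
    Admissible B h (s :: l) ↔ B h s ∧ Admissible B (h + drift s) l := Iff.rfl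

@[simp] lemma stays_nil (h : ℤ) : Stays R h [] ↔ R h := Iff.rfl

@[simp] lemma stays_cons (h : ℤ) (s : ℤ × ℤ) (l : List (ℤ × ℤ)) :
    Stays R h (s :: l) ↔ R h ∧ Stays R (h + drift s) l := Iff.rfl

lemma admissible_append (h : ℤ) (l₁ l₂ : List (ℤ × ℤ)) :
    Admissible B h (l₁ ++ l₂) ↔ Admissible B h l₁ ∧ Admissible B (h + height l₁) l₂ := by
  induction l₁ generalizing h with
  | nil => simp
  | cons s l ih => simp [ih, and_assoc, add_assoc]

lemma Admissible.mem_steps (hB : ∀ h s, B h s → s ∈ steps) :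
    ∀ {h : ℤ} {l : List (ℤ × ℤ)}, Admissible B h l → ∀ s ∈ l, s ∈ steps
  | _, [], _ => by simp
  | _, s :: _, ⟨hs, hl⟩ => by
    simpa [hB _ _ hs] using hl.mem_steps hB

lemma stays_iff (h : ℤ) (l : List (ℤ × ℤ)) :
    Stays R h l ↔ Admissible (fun h _ => R h) h l ∧ R (h + height l) := by
  induction l generalizing h with
  | nil => simp
  | cons s l ih => simp [ih, and_assoc, add_assoc]

lemma Stays.mono (hRS : ∀ h, R h → S h) : ∀ {h : ℤ} {l : List (ℤ × ℤ)}, Stays R h l → Stays S h l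
  | _, [], hl => hRS _ hl
  | _, _ :: _, ⟨hh, hl⟩ => ⟨hRS _ hh, hl.mono hRS⟩

lemma Stays.start : ∀ {h : ℤ} {l : List (ℤ × ℤ)}, Stays R h l → R h
  | _, [], hl => hl
  | _, _ :: _, hl => hl.1

lemma stays_add (h c : ℤ) (l : List (ℤ × ℤ)) :
    Stays R (h + c) l ↔ Stays (fun x => R (x + c)) h l := by
  induction l generalizing h with
  | nil => simp
  | cons s l ih => simp [← ih, add_right_comm]

lemma Admissible.stays (hBR : ∀ h s, R h → B h s → R (h + drift s)) :
    ∀ {h : ℤ} {l : List (ℤ × ℤ)}, R h → Admissible B h l → Stays R h l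
  | _, [], hh, _ => hh
  | _, _ :: _, hh, ⟨hs, hl⟩ => ⟨hh, hl.stays hBR (hBR _ _ hh hs)⟩

lemma admissible_add_iff (c : ℤ) (hBC : ∀ h s, R h → R (h + drift s) → (B (h + c) s ↔ C h s)) :
    ∀ {h : ℤ} {l : List (ℤ × ℤ)}, Stays R h l → (Admissible B (h + c) l ↔ Admissible C h l)
  | _, [], _ => by simp
  | h, s :: l, ⟨hh, hl⟩ => by
    rw [admissible_cons, admissible_cons, add_right_comm, admissible_add_iff c hBC hl,
      hBC h s hh hl.start]

-- Heights move by at most one per step, so a path that never reaches `-ε` keeps to the side of `ε`.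
lemma Stays.side {ε : ℤ} (hε : ε = 1 ∨ ε = -1) :
    ∀ {h : ℤ} {l : List (ℤ × ℤ)}, (∀ s ∈ l, s ∈ steps) → 0 ≤ ε * h →
      Stays (fun x => x + ε ≠ 0) h l → Stays (fun x => 0 ≤ ε * x) h l
  | _, [], _, hh, _ => hh
  | h, s :: l, hsteps, hh, ⟨_, hl⟩ => by
    have hs := abs_drift_le_one (hsteps s List.mem_cons_self)
    have hnext := hl.start
    refine ⟨hh, Stays.side hε (fun t ht => hsteps t (List.mem_cons_of_mem s ht)) ?_ hl⟩
    rw [abs_le] at hs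
    rcases hε with rfl | rfl <;> omega

def Paths (B : ℤ → ℤ × ℤ → Prop) (n : ℕ) : Set (List (ℤ × ℤ)) :=
  {l | Admissible B 0 l ∧ endPt l = ((n : ℤ), (n : ℤ))}

def IsPrimitive : List (ℤ × ℤ) → Prop
  | [] => False
  | s :: t => Admissible (fun h _ => h ≠ 0) (drift s) t

def Primitive (B : ℤ → ℤ × ℤ → Prop) (n : ℕ) : Set (List (ℤ × ℤ)) :=
  {l | l ∈ Paths B n ∧ IsPrimitive l}

lemma paths_finite (hB : ∀ h s, B h s → s ∈ steps) (n : ℕ) : (Paths B n).Finite := by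
  refine ((List.finite_length_le steps (2 * n)).image (List.map Subtype.val)).subset ?_
  rintro l ⟨hl, hend⟩
  have hsteps := hl.mem_steps hB
  have hlen := length_le_endPt hsteps
  rw [hend] at hlen
  exact ⟨l.pmap Subtype.mk hsteps, by simp only [Set.mem_ofPred, List.length_pmap]; omega,
    by simp [List.map_pmap]⟩

lemma paths_zero (hB : ∀ h s, B h s → s ∈ steps) : Paths B 0 = {[]} := by
  ext l
  refine ⟨fun ⟨hl, hend⟩ => ?_, fun hl => (Set.mem_singleton_iff.mp hl) ▸ ⟨trivial, rfl⟩⟩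
  have hlen := length_le_endPt (hl.mem_steps hB)
  rw [hend] at hlen
  simpa using hlen

lemma exists_admissible_ne_zero_append :
    ∀ {h : ℤ} {l : List (ℤ × ℤ)}, h + height l = 0 →
      ∃ a r, l = a ++ r ∧ Admissible (fun x _ => x ≠ 0) h a ∧ h + height a = 0
  | h, l, hl => by
    by_cases h0 : h = 0
    · exact ⟨[], l, rfl, trivial, by simpa using h0⟩
    cases l with
    | nil => simp_all
    | cons s l =>
      obtain ⟨a, r, rfl, ha, ha0⟩ :=
        exists_admissible_ne_zero_append (h := h + drift s) (l := l) (by simp at hl; linarith)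
      exact ⟨s :: a, r, rfl, ⟨h0, ha⟩, by simp; linarith⟩

lemma eq_of_admissible_ne_zero_append :
    ∀ {h : ℤ} {a₁ a₂ r₁ r₂ : List (ℤ × ℤ)},
      Admissible (fun x _ => x ≠ 0) h a₁ → h + height a₁ = 0 →
      Admissible (fun x _ => x ≠ 0) h a₂ → h + height a₂ = 0 → a₁ ++ r₁ = a₂ ++ r₂ → a₁ = a₂
  | _, [], [], _, _, _, _, _, _, _ => rfl
  | _, [], _ :: _, _, _, _, h0, ⟨hne, _⟩, _, _ => absurd (by simpa using h0) hne
  | _, _ :: _, [], _, _, ⟨hne, _⟩, _, _, h0, _ => absurd (by simpa using h0) hne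
  | h, s :: a₁, s' :: a₂, r₁, r₂, ⟨_, ha₁⟩, h₁, ⟨_, ha₂⟩, h₂, e => by
    obtain ⟨rfl, e'⟩ := List.cons.inj e
    rw [eq_of_admissible_ne_zero_append (h := h + drift s) ha₁ (by simp at h₁; linarith) ha₂
      (by simp at h₂; linarith) e']

lemma exists_isPrimitive_append {l : List (ℤ × ℤ)} (hl : l ≠ []) (h0 : height l = 0) :
    ∃ a r, l = a ++ r ∧ IsPrimitive a ∧ height a = 0 := by
  obtain ⟨s, t, rfl⟩ := List.exists_cons_of_ne_nil hl
  obtain ⟨a, r, rfl, ha, ha0⟩ := exists_admissible_ne_zero_append (h := drift s) (l := t)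
    (by simpa using h0)
  exact ⟨s :: a, r, rfl, ha, by simpa using ha0⟩

lemma eq_of_isPrimitive_append {a₁ a₂ r₁ r₂ : List (ℤ × ℤ)} (h₁ : IsPrimitive a₁)
    (h₁0 : height a₁ = 0) (h₂ : IsPrimitive a₂) (h₂0 : height a₂ = 0) (e : a₁ ++ r₁ = a₂ ++ r₂) :
    a₁ = a₂ ∧ r₁ = r₂ := by
  obtain rfl : a₁ = a₂ := by
    match a₁, a₂, h₁, h₂ with
    | s :: a₁, s' :: a₂, h₁, h₂ =>
      obtain ⟨rfl, e'⟩ := List.cons.inj e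
      rw [eq_of_admissible_ne_zero_append h₁ (by simpa using h₁0) h₂ (by simpa using h₂0) e']
  exact ⟨rfl, List.append_cancel_left e⟩

lemma append_mem_paths {m n : ℕ} {a r : List (ℤ × ℤ)} (ha : a ∈ Primitive B (m + 1))
    (hr : r ∈ Paths B (n - m)) (hmn : m ≤ n) : a ++ r ∈ Paths B (n + 1) := by
  obtain ⟨⟨ha, hea⟩, -⟩ := ha
  obtain ⟨hr, her⟩ := hr
  refine ⟨(admissible_append 0 a r).2 ⟨ha, by simpa [height_eq_zero_of_endPt hea] using hr⟩, ?_⟩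
  rw [endPt_append, hea, her]
  ext <;> simp <;> omega

lemma exists_primitive_append (hB : ∀ h s, B h s → s ∈ steps) {n : ℕ} {l : List (ℤ × ℤ)}
    (hl : l ∈ Paths B (n + 1)) :
    ∃ m : Fin (n + 1), ∃ a ∈ Primitive B (m + 1), ∃ r ∈ Paths B (n - m), l = a ++ r := by
  obtain ⟨hadm, hend⟩ := hl
  have hne : l ≠ [] := by rintro rfl; simp [Prod.ext_iff] at hend; omega
  obtain ⟨a, r, rfl, hprim, ha0⟩ := exists_isPrimitive_append hne (height_eq_zero_of_endPt hend)
  obtain ⟨ha, hr⟩ := (admissible_append 0 a r).1 hadm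
  rw [ha0, zero_add] at hr
  have hlen := length_le_endPt (ha.mem_steps hB)
  have hr0 := endPt_fst_nonneg (hr.mem_steps hB)
  have hdiag : (endPt a).1 = (endPt a).2 := by simpa [height, drift, sub_eq_zero] using ha0
  have hsum := congrArg Prod.fst hend
  have hsum' := congrArg Prod.snd hend
  simp only [endPt_append, Prod.fst_add, Prod.snd_add] at hsum hsum'
  have hpos : 0 < a.length := List.length_pos_of_ne_nil (by rintro rfl; exact hprim)
  obtain ⟨m, hm⟩ : ∃ m : ℕ, (endPt a).1 = m + 1 := ⟨((endPt a).1 - 1).toNat, by omega⟩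
  refine ⟨⟨m, by omega⟩, a, ⟨⟨ha, ?_⟩, hprim⟩, r, ⟨hr, ?_⟩, rfl⟩
  · ext <;> simp <;> omega
  · ext <;> simp <;> omega

lemma eq_of_mem_primitive_append {m₁ m₂ : ℕ} {a₁ a₂ r₁ r₂ : List (ℤ × ℤ)}
    (ha₁ : a₁ ∈ Primitive B m₁) (ha₂ : a₂ ∈ Primitive B m₂) (e : a₁ ++ r₁ = a₂ ++ r₂) :
    m₁ = m₂ ∧ a₁ = a₂ ∧ r₁ = r₂ := by
  obtain ⟨⟨-, he₁⟩, hp₁⟩ := ha₁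
  obtain ⟨⟨-, he₂⟩, hp₂⟩ := ha₂
  obtain ⟨rfl, rfl⟩ := eq_of_isPrimitive_append hp₁ (height_eq_zero_of_endPt he₁) hp₂
    (height_eq_zero_of_endPt he₂) e
  rw [he₁] at he₂
  simp only [Prod.mk.injEq, Nat.cast_inj, and_self] at he₂
  exact ⟨he₂, rfl, rfl⟩

noncomputable def primitiveAppendEquiv (hB : ∀ h s, B h s → s ∈ steps) (n : ℕ) :
    (Σ m : Fin (n + 1), Primitive B (m + 1) × Paths B (n - m)) ≃ Paths B (n + 1) :=
  Equiv.ofBijective (fun x => ⟨x.2.1 ++ x.2.2, append_mem_paths x.2.1.2 x.2.2.2 (by omega)⟩) <| by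
    refine ⟨?_, fun l => ?_⟩
    · rintro ⟨m₁, a₁, r₁⟩ ⟨m₂, a₂, r₂⟩ e
      obtain ⟨hm, ha, hr⟩ := eq_of_mem_primitive_append a₁.2 a₂.2 (congrArg Subtype.val e)
      obtain rfl : m₁ = m₂ := Fin.ext (by simpa using hm)
      rw [Subtype.ext ha, show r₁ = r₂ from Subtype.ext hr]
    · obtain ⟨m, a, ha, r, hr, e⟩ := exists_primitive_append hB l.2
      exact ⟨⟨m, ⟨a, ha⟩, ⟨r, hr⟩⟩, Subtype.ext e.symm⟩

lemma card_paths_succ (hB : ∀ h s, B h s → s ∈ steps) (n : ℕ) :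
    Nat.card (Paths B (n + 1)) =
      ∑ m : Fin (n + 1), Nat.card (Primitive B (m + 1)) * Nat.card (Paths B (n - m)) := by
  have (k : ℕ) : Finite (Paths B k) := (paths_finite hB k).to_subtype
  have (k : ℕ) : Finite (Primitive B k) :=
    ((paths_finite hB k).subset fun _ hl => hl.1).to_subtype
  rw [← Nat.card_congr (primitiveAppendEquiv hB n), Nat.card_sigma]
  simp only [Nat.card_prod]

lemma card_eq_sum_card_cons {P : Set (List (ℤ × ℤ))} (hP : P.Finite) {U : Finset (ℤ × ℤ)}
    (hU : ∀ l ∈ P, ∃ u ∈ U, ∃ t, l = u :: t) :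
    Nat.card P = ∑ u ∈ U, Nat.card {t | u :: t ∈ P} := by
  have hne (l) (hl : l ∈ P) : l ≠ [] := by
    obtain ⟨u, -, t, rfl⟩ := hU l hl
    exact List.cons_ne_nil u t
  have hhead (l) (hl : l ∈ P) : l.head (hne l hl) ∈ U := by
    obtain ⟨u, hu, t, rfl⟩ := hU l hl
    exact hu
  let e : P ≃ Σ u : U, {t | (u : ℤ × ℤ) :: t ∈ P} :=
    { toFun := fun l => ⟨⟨l.1.head (hne _ l.2), hhead _ l.2⟩,
        ⟨l.1.tail, show _ :: _ ∈ P by rw [List.cons_head_tail]; exact l.2⟩⟩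
      invFun := fun x => ⟨x.1 :: x.2.1, x.2.2⟩
      left_inv := fun l => Subtype.ext (List.cons_head_tail _)
      right_inv := fun _ => rfl }
  have (u : U) : Finite {t | (u : ℤ × ℤ) :: t ∈ P} :=
    (hP.preimage List.cons_injective.injOn).to_subtype
  rw [Nat.card_congr e, Nat.card_sigma]
  exact Finset.sum_coe_sort U fun u => Nat.card {t | u :: t ∈ P}

lemma cons_primitive_eq_empty {u : ℤ × ℤ} (hu : ¬ B 0 u) (m : ℕ) :
    {t | u :: t ∈ Primitive B m} = ∅ :=
  Set.eq_empty_iff_forall_notMem.2 fun _ ht => hu ht.1.1.1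

lemma cons_diag_primitive_eq (hD : B 0 (1, 1)) (m : ℕ) :
    {t | (1, 1) :: t ∈ Primitive B m} = {t | t = [] ∧ m = 1} := by
  ext t
  constructor
  · rintro ⟨⟨-, hend⟩, hprim⟩
    obtain rfl : t = [] := by
      cases t with
      | nil => rfl
      | cons s t => exact absurd hprim.1 (by simp [drift])
    refine ⟨rfl, ?_⟩
    simp [Prod.ext_iff] at hend
    omega
  · rintro ⟨rfl, rfl⟩
    exact ⟨⟨⟨hD, trivial⟩, by simp⟩, trivial⟩

lemma admissible_ne_zero_append_singleton (ε : ℤ) (w : List (ℤ × ℤ)) (v : ℤ × ℤ) :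
    Admissible (fun h _ => h ≠ 0) ε (w ++ [v]) ↔ Stays (fun x => x + ε ≠ 0) 0 w := by
  have := stays_add (R := (· ≠ 0)) 0 ε w
  rw [zero_add] at this
  rw [← this, stays_iff, admissible_append]
  simp

lemma exists_eq_append_stays_side {ε : ℤ} (hε : ε = 1 ∨ ε = -1) {t : List (ℤ × ℤ)} {v : ℤ × ℤ}
    (hsteps : ∀ s ∈ t, s ∈ steps) (hv : v ∈ steps) (hvε : drift v = -ε)
    (ht : Admissible (fun h _ => h ≠ 0) ε t) (ht0 : ε + height t = 0) :
    ∃ w, t = w ++ [v] ∧ Stays (fun x => 0 ≤ ε * x) 0 w ∧ height w = 0 := by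
  obtain ⟨w, v', rfl⟩ : ∃ w v', t = w ++ [v'] := by
    rcases List.eq_nil_or_concat t with rfl | ⟨w, v', rfl⟩
    · rcases hε with rfl | rfl <;> simp at ht0
    · exact ⟨w, v', List.concat_eq_append⟩
  rw [admissible_ne_zero_append_singleton] at ht
  have hw := ht.side hε (fun s hs => hsteps s (by simp [hs])) (by simp)
  have hv' := abs_drift_le_one (hsteps v' (by simp))
  have hw0 : height w = 0 := by
    have := ((stays_iff 0 w).1 hw).2
    simp only [height_append, height_cons, height_nil] at ht0
    rw [abs_le] at hv'
    rcases hε with rfl | rfl <;> simp at this <;> omega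
  obtain rfl : v = v' := eq_of_drift_eq hv (hsteps v' (by simp)) (by
    simp only [height_append, height_cons, height_nil, hw0] at ht0; omega)
  exact ⟨w, rfl, hw, hw0⟩

/-- A primitive path leaving the diagonal by `u` to the side `ε` is `u :: w ++ [v]` with `w`
staying on that side, where `B` acts like `C` shifted by `ε`. -/
lemma cons_primitive_eq_image (hB : ∀ h s, B h s → s ∈ steps) {ε : ℤ} (hε : ε = 1 ∨ ε = -1)
    {u v : ℤ × ℤ} (hu : drift u = ε) (hv : drift v = -ε) (huv : u + v = (1, 1))
    (hBu : B 0 u) (hBv : B ε v) (hC : ∀ h s, 0 ≤ ε * h → C h s → 0 ≤ ε * (h + drift s))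
    (hBC : ∀ h s, 0 ≤ ε * h → 0 ≤ ε * (h + drift s) → (B (h + ε) s ↔ C h s)) (k : ℕ) :
    {t | u :: t ∈ Primitive B (k + 1)} = (· ++ [v]) '' Paths C k := by
  have hend_wrap (w : List (ℤ × ℤ)) : endPt (u :: (w ++ [v])) = (1, 1) + endPt w := by
    rw [← huv, endPt_cons, endPt_append, endPt_cons, endPt_nil]
    abel
  ext t
  constructor
  · rintro ⟨⟨⟨-, ht⟩, hend⟩, hprim⟩
    rw [zero_add, hu] at ht
    obtain ⟨w, rfl, hw, hw0⟩ := exists_eq_append_stays_side hε (ht.mem_steps hB) (hB _ _ hBv) hv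
      (hu ▸ hprim) (by simpa [hu] using height_eq_zero_of_endPt hend)
    have hwB : Admissible B (0 + ε) w := by simpa using ((admissible_append ε w [v]).1 ht).1
    refine ⟨w, ⟨(admissible_add_iff ε hBC hw).1 hwB, ?_⟩, rfl⟩
    rw [hend_wrap] at hend
    ext <;> simp [Prod.ext_iff] at hend ⊢ <;> omega
  · rintro ⟨w, ⟨hw, hend⟩, rfl⟩
    have hstay := hw.stays (R := fun x => 0 ≤ ε * x) hC (by simp)
    have hw0 := height_eq_zero_of_endPt hend
    refine ⟨⟨⟨hBu, ?_⟩, ?_⟩, ?_⟩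
    · rw [zero_add, hu, admissible_append, hw0, add_zero]
      exact ⟨by simpa using (admissible_add_iff ε hBC hstay).2 hw, by simpa using hBv⟩
    · rw [hend_wrap, hend]
      ext <;> simp [add_comm]
    · change Admissible _ (drift u) _
      rw [hu, admissible_ne_zero_append_singleton]
      exact hstay.mono fun x hx => by rcases hε with rfl | rfl <;> omega

lemma card_primitive (hB : ∀ h s, B h s → s ∈ steps) (m : ℕ) :
    Nat.card (Primitive B m) = Nat.card {t | (1, 0) :: t ∈ Primitive B m} +
      Nat.card {t | (0, 1) :: t ∈ Primitive B m} + Nat.card {t | (1, 1) :: t ∈ Primitive B m} := by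
  have hU (l) (hl : l ∈ Primitive B m) : ∃ u ∈ steps, ∃ t, l = u :: t := by
    obtain ⟨⟨hadm, -⟩, hprim⟩ := hl
    cases l with
    | nil => exact hprim.elim
    | cons s t => exact ⟨s, hB 0 s hadm.1, t, rfl⟩
  rw [card_eq_sum_card_cons ((paths_finite hB m).subset fun _ hl => hl.1) hU, steps,
    Finset.sum_insert (by decide), Finset.sum_insert (by decide), Finset.sum_singleton, add_assoc]

lemma card_image_append_singleton (v : ℤ × ℤ) (S : Set (List (ℤ × ℤ))) :
    Nat.card ((· ++ [v]) '' S) = Nat.card S :=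
  Nat.card_image_of_injective (List.append_left_injective [v]) S

def starRule (h : ℤ) (s : ℤ × ℤ) : Prop := s = (1, 0) ∨ s = (0, 1) ∨ (s = (1, 1) ∧ h < 0)

def dyckRule (h : ℤ) (s : ℤ × ℤ) : Prop := s = (1, 0) ∨ (s = (0, 1) ∧ 0 < h)

def schroederRule (h : ℤ) (s : ℤ × ℤ) : Prop := (s = (1, 0) ∧ h < 0) ∨ s = (0, 1) ∨ s = (1, 1)

lemma starRule_mem_steps (h : ℤ) (s : ℤ × ℤ) (hs : starRule h s) : s ∈ steps := by
  rcases hs with rfl | rfl | ⟨rfl, -⟩ <;> decide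

lemma dyckRule_mem_steps (h : ℤ) (s : ℤ × ℤ) (hs : dyckRule h s) : s ∈ steps := by
  rcases hs with rfl | ⟨rfl, -⟩ <;> decide

lemma schroederRule_mem_steps (h : ℤ) (s : ℤ × ℤ) (hs : schroederRule h s) : s ∈ steps := by
  rcases hs with ⟨rfl, -⟩ | rfl | rfl <;> decide

lemma card_primitive_dyck (k : ℕ) :
    Nat.card (Primitive dyckRule (k + 1)) = Nat.card (Paths dyckRule k) := by
  rw [card_primitive dyckRule_mem_steps,
    cons_primitive_eq_image dyckRule_mem_steps (ε := 1) (v := (0, 1)) (C := dyckRule) (Or.inl rfl)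
      (by simp [drift]) (by simp [drift]) (by simp) (Or.inl rfl) (Or.inr ⟨rfl, one_pos⟩)
      (by rintro h ⟨x, y⟩ hh hs; simp [dyckRule, drift] at *; omega)
      (by rintro h ⟨x, y⟩ h₁ h₂; simp [dyckRule, drift] at *; omega),
    cons_primitive_eq_empty (by simp [dyckRule]), cons_primitive_eq_empty (by simp [dyckRule]),
    card_image_append_singleton]
  simp

lemma card_primitive_schroeder (k : ℕ) :
    Nat.card (Primitive schroederRule (k + 1)) =
      Nat.card (Paths schroederRule k) + if k = 0 then 1 else 0 := by
  rw [card_primitive schroederRule_mem_steps, cons_primitive_eq_empty (by simp [schroederRule]),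
    cons_primitive_eq_image schroederRule_mem_steps (ε := -1) (v := (1, 0)) (C := schroederRule)
      (Or.inr rfl) (by simp [drift]) (by simp [drift]) (by simp) (Or.inr (Or.inl rfl))
      (Or.inl ⟨rfl, neg_one_lt_zero⟩)
      (by rintro h ⟨x, y⟩ hh hs; simp [schroederRule, drift] at *; omega)
      (by rintro h ⟨x, y⟩ h₁ h₂; simp [schroederRule, drift] at *; omega),
    cons_diag_primitive_eq (Or.inr (Or.inr rfl)), card_image_append_singleton]
  cases k <;> simp

lemma card_primitive_star (k : ℕ) :
    Nat.card (Primitive starRule (k + 1)) =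
      Nat.card (Paths dyckRule k) + Nat.card (Paths schroederRule k) := by
  rw [card_primitive starRule_mem_steps,
    cons_primitive_eq_image starRule_mem_steps (ε := 1) (v := (0, 1)) (C := dyckRule) (Or.inl rfl)
      (by simp [drift]) (by simp [drift]) (by simp) (Or.inl rfl) (Or.inr (Or.inl rfl))
      (by rintro h ⟨x, y⟩ hh hs; simp [dyckRule, drift] at *; omega)
      (by rintro h ⟨x, y⟩ h₁ h₂; simp [starRule, dyckRule, drift] at *; omega),
    cons_primitive_eq_image starRule_mem_steps (ε := -1) (v := (1, 0)) (C := schroederRule)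
      (Or.inr rfl) (by simp [drift]) (by simp [drift]) (by simp) (Or.inr (Or.inl rfl)) (Or.inl rfl)
      (by rintro h ⟨x, y⟩ hh hs; simp [schroederRule, drift] at *; omega)
      (by rintro h ⟨x, y⟩ h₁ h₂; simp [starRule, schroederRule, drift] at *; omega),
    cons_primitive_eq_empty (by simp [starRule]), card_image_append_singleton,
    card_image_append_singleton]
  simp

lemma card_paths_dyck (n : ℕ) : Nat.card (Paths dyckRule n) = catalan n := by
  induction n using Nat.strong_induction_on with
  | _ n ih =>
    cases n with
    | zero => simp [paths_zero dyckRule_mem_steps]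
    | succ n =>
      rw [card_paths_succ dyckRule_mem_steps, catalan_succ]
      refine Finset.sum_congr rfl fun m _ => ?_
      rw [card_primitive_dyck, ih m (by omega), ih (n - m) (by omega)]

lemma card_paths_schroeder (n : ℕ) : Nat.card (Paths schroederRule n) = schroeder n := by
  induction n using Nat.strong_induction_on with
  | _ n ih =>
    cases n with
    | zero => simp [paths_zero schroederRule_mem_steps, schroeder]
    | succ n =>
      have hterm (m : Fin (n + 1)) :
          Nat.card (Primitive schroederRule (m + 1)) * Nat.card (Paths schroederRule (n - m)) =
            schroeder m * schroeder (n - m) + if (m : ℕ) = 0 then schroeder n else 0 := by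
        rw [card_primitive_schroeder, ih m (by omega), ih (n - m) (by omega)]
        split_ifs with hm <;> simp [hm, add_mul]
      rw [card_paths_succ schroederRule_mem_steps, schroeder,
        Finset.sum_congr rfl fun m _ => hterm m, Finset.sum_add_distrib,
        Fin.sum_univ_succ (fun m : Fin (n + 1) => ite _ _ _)]
      simp [add_comm]

lemma card_paths_star_succ (n : ℕ) :
    Nat.card (Paths starRule (n + 1)) =
      ∑ m : Fin (n + 1), (catalan m + schroeder m) * Nat.card (Paths starRule (n - m)) := by
  rw [card_paths_succ starRule_mem_steps]
  simp only [card_primitive_star, card_paths_dyck, card_paths_schroeder]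

lemma okFrom_iff_admissible (p : ℤ × ℤ) (l : List (ℤ × ℤ)) :
    okFrom (fun p => p.1 < p.2) p l ↔ Admissible starRule (p.1 - p.2) l := by
  induction l generalizing p with
  | nil => simp [okFrom]
  | cons s l ih =>
    rw [okFrom, ih, admissible_cons, starRule, sub_neg, drift]
    ring_nf

lemma lCSstar_eq_paths (n : ℕ) : LCSstar n n = Paths starRule n := by
  ext l
  simp [LCSstar, Paths, okFrom_iff_admissible]

end LatticePath

open LatticePath

/-- F*(x)·(1 − x·(C(x)+S(x))) = 1 in ℤ[[x]]. -/
theorem Fstar_gf :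
    FstarGF * (1 - PowerSeries.X * (catalanGF + schroederGF)) = 1 := by
  have hfstar (n : ℕ) : fCSstar n = Nat.card (Paths starRule n) := by
    rw [fCSstar, lCSstar_eq_paths]
  have hCS : catalanGF + schroederGF = mk fun n => (catalan n + schroeder n : ℤ) := by
    ext n
    simp [catalanGF, schroederGF]
  rw [hCS, FstarGF]
  refine mk_mul_one_sub_X_mul_mk_eq_one ?_ fun n => ?_
  · simp [hfstar, paths_zero starRule_mem_steps]
  · simp only [hfstar, card_paths_star_succ]
    push_cast
    rfl
end
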